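/- Let (c_i)_{i≥1} be real numbers with c_i ≥ 0 for all i, and put φ_i = [[1, 0],[c_i, 1]] ∈ SL(2,ℝ). Then for every τ > 0 the sequence (f^{(k)}(τ))_{k≥1} is unbounded. -/
import Mathlib


/-- The matrix `h^t = [[1, t],[0, 1]] ∈ SL(2,ℝ)`. -/
def hMat (t : ℝ) : Matrix (Fin 2) (Fin 2) ℝ := !![1, t; 0, 1]

/-- The kicked evolution `f^{(k)}(τ) = φ_k h^τ φ_{k-1} h^τ ⋯ φ_1 h^τ`. -/
def kickedEvol (φ : ℕ → Matrix (Fin 2) (Fin 2) ℝ) (τ : ℝ) :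
    ℕ → Matrix (Fin 2) (Fin 2) ℝ
  | 0 => 1
  | k + 1 => φ (k + 1) * hMat τ * kickedEvol φ τ k

/-- A sequence of matrices is bounded if all its entries are uniformly bounded
(equivalently, it lies in a compact subset). -/
def MatSeqBounded (f : ℕ → Matrix (Fin 2) (Fin 2) ℝ) : Prop :=
  ∃ C : ℝ, ∀ k : ℕ, 1 ≤ k → ∀ i j : Fin 2, |f k i j| ≤ C

/-- for lower-triangular kicks `φ_i = [[1, 0],[c_i, 1]]` with all `c_i ≥ 0`,
for every period `τ > 0` the kicked evolution is unbounded. -/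
theorem stmt_14 (c : ℕ → ℝ) (hc : ∀ i : ℕ, 1 ≤ i → 0 ≤ c i)
    (φ : ℕ → Matrix (Fin 2) (Fin 2) ℝ)
    (hφ : ∀ i : ℕ, 1 ≤ i → φ i = !![1, 0; c i, 1]) :
    ∀ τ : ℝ, 0 < τ → ¬ MatSeqBounded (kickedEvol φ τ) := by
  intro τ hτ
  rintro ⟨C, hC⟩
  set f := kickedEvol φ τ with hf
  have key : ∀ k : ℕ, (∀ i j, 0 ≤ f k i j) ∧ 1 ≤ f k 1 1 ∧ (k : ℝ) * τ ≤ f k 0 1 := by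
    intro k
    induction k with
    | zero =>
      refine ⟨?_, ?_, ?_⟩
      · intro i j
        fin_cases i <;> fin_cases j <;>
          simp [hf, kickedEvol, Matrix.one_apply]
      · simp [hf, kickedEvol, Matrix.one_apply]
      · simp [hf, kickedEvol, Matrix.one_apply]
    | succ k ih =>
      obtain ⟨hpos, hd, hb⟩ := ih
      have hck : 0 ≤ c (k + 1) := hc (k + 1) (by omega)
      have hstep : f (k + 1) = !![1, τ; c (k + 1), c (k + 1) * τ + 1] * f k := by
        show φ (k + 1) * hMat τ * f k = _
        rw [hφ (k + 1) (by omega)]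
        congr 1
        ext i j
        fin_cases i <;> fin_cases j <;>
          simp [hMat, Matrix.mul_apply, Fin.sum_univ_two]
      have entry : ∀ i j : Fin 2, f (k + 1) i j =
          !![1, τ; c (k + 1), c (k + 1) * τ + 1] i 0 * f k 0 j +
          !![1, τ; c (k + 1), c (k + 1) * τ + 1] i 1 * f k 1 j := by
        intro i j
        rw [hstep, Matrix.mul_apply, Fin.sum_univ_two]
      have e01 : f (k + 1) 0 1 = f k 0 1 + τ * f k 1 1 := by
        rw [entry 0 1]; norm_num
      have e11 : f (k + 1) 1 1 = c (k + 1) * f k 0 1 + (c (k + 1) * τ + 1) * f k 1 1 := by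
        rw [entry 1 1]; norm_num
      refine ⟨?_, ?_, ?_⟩
      · intro i j
        rw [entry i j]
        fin_cases i <;> simp <;>
          nlinarith [hpos 0 j, hpos 1 j, mul_nonneg hτ.le (hpos 1 j),
            mul_nonneg hck (hpos 0 j),
            mul_nonneg (mul_nonneg hck hτ.le) (hpos 1 j)]
      · rw [e11]
        nlinarith [mul_nonneg hck (hpos 0 1),
          mul_nonneg (mul_nonneg hck hτ.le) (hpos 1 1), hd]
      · rw [e01]
        push_cast
        nlinarith [hpos 0 1]
  obtain ⟨n, hn⟩ := exists_nat_gt (C / τ)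
  have h1 : ((n + 1 : ℕ) : ℝ) * τ ≤ f (n + 1) 0 1 := (key (n + 1)).2.2
  have h2 : |f (n + 1) 0 1| ≤ C := hC (n + 1) (by omega) 0 1
  have h3 : f (n + 1) 0 1 ≤ C := (abs_le.mp h2).2
  have h4 : C < (n : ℝ) * τ := by
    rwa [div_lt_iff₀ hτ] at hn
  push_cast at h1
  nlinarith [hτ]
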